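/- arXiv:2501.12145 — 2 statements merged into one kernel-verified Lean document; each statement's English description precedes it below -/
import Mathlib

section
/- Under the stated assumptions, for all j, ℓ ∈ {1,…,d} and all x in the interior of B_M^d where the map ξ ↦ α(ξ, −x·ξ) has no jump (i.e. for almost every x), the second-order partial derivative of u admits the representation ∂_j ∂_ℓ u(x) = ∫_{ℝ^d} ξ_j ξ_ℓ α(ξ, −x·ξ) dξ. -/
open MeasureTheory
open scoped BigOperators

open scoped BigOperators

/-- `𝒢(ξ) = |G(ξ)| + |G(−ξ)|`. -/
noncomputable def calG {d : ℕ} (G : EuclideanSpace ℝ (Fin d) → ℂ)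
    (ξ : EuclideanSpace ℝ (Fin d)) : ℝ :=
  ‖G ξ‖ + ‖G (-ξ)‖

/-- `g̃(ξ) = 2 Re G(ξ) − Im G(ξ)`. -/
noncomputable def gTilde {d : ℕ} (G : EuclideanSpace ℝ (Fin d) → ℂ)
    (ξ : EuclideanSpace ℝ (Fin d)) : ℝ :=
  2 * (G ξ).re - (G ξ).im

/-- `β(ξ,u) = Re[e^{−iu} G(ξ) + e^{iu} G(−ξ)]`. -/
noncomputable def betaFn {d : ℕ} (G : EuclideanSpace ℝ (Fin d) → ℂ)
    (ξ : EuclideanSpace ℝ (Fin d)) (u : ℝ) : ℝ :=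
  (Complex.exp (-(Complex.I * (u : ℂ))) * G ξ + Complex.exp (Complex.I * (u : ℂ)) * G (-ξ)).re

/-- `α(ξ,u) = −1_{(−M‖ξ‖₁,0]}(u) β(ξ,u) + 1_{[0,1]}(u) g̃(ξ) − 1_{[−1,0]}(u) g̃(−ξ)`. -/
noncomputable def alphaFn {d : ℕ} (M : ℝ) (G : EuclideanSpace ℝ (Fin d) → ℂ)
    (ξ : EuclideanSpace ℝ (Fin d)) (u : ℝ) : ℝ :=
  -Set.indicator (Set.Ioc (-(M * ∑ i, |ξ i|)) 0) (fun _ => (1 : ℝ)) u * betaFn G ξ u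
    + Set.indicator (Set.Icc (0 : ℝ) 1) (fun _ => (1 : ℝ)) u * gTilde G ξ
    - Set.indicator (Set.Icc (-1 : ℝ) 0) (fun _ => (1 : ℝ)) u * gTilde G (-ξ)


/-! On the ball `u = Re ∫ e^{i⟪x,ξ⟫} G(ξ) dξ`, and the weight `(1 + ‖ξ‖)²` allows differentiating
twice under the integral: `∂_j ∂_ℓ u(x) = -∫ ξ_j ξ_ℓ Re (e^{i⟪x,ξ⟫} G(ξ)) dξ`. The right-hand
side is symmetrized under `ξ ↦ -ξ`. For `x ≠ 0` and almost every `ξ`, `s = ⟪x,ξ⟫` is nonzero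
with `|s| < M‖ξ‖₁`, so exactly one of `±s` lies in `(-M‖ξ‖₁, 0]` and the `g̃`-terms cancel:
`α(ξ,-s) + α(-ξ,s) = -β(ξ,-s) = -Re (e^{is} G(ξ)) - Re (e^{-is} G(-ξ))`. -/

open Complex Filter Topology
open scoped InnerProductSpace

lemma integrable_of_integrable_one_add_norm_mul {α F : Type*} [MeasurableSpace α]
    [NormedAddCommGroup α] [NormedAddCommGroup F] {μ : Measure α} {f : α → F}
    (hf : AEStronglyMeasurable f μ) (hfi : Integrable (fun x => (1 + ‖x‖) * ‖f x‖) μ) :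
    Integrable f μ :=
  hfi.mono' hf (.of_forall fun x => by nlinarith [norm_nonneg x, norm_nonneg (f x)])

section ExpIntegral

variable {E : Type*} [NormedAddCommGroup E] [InnerProductSpace ℝ E]

lemma hasFDerivAt_exp_I_mul_inner (ξ x : E) :
    HasFDerivAt (fun y : E => exp (I * ⟪y, ξ⟫_ℝ))
      ((innerSL ℝ ξ).smulRight (I * exp (I * ⟪x, ξ⟫_ℝ))) x := by
  have hinner : HasFDerivAt (fun y : E => (⟪y, ξ⟫_ℝ : ℂ)) (ofRealCLM.comp (innerSL ℝ ξ)) x := by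
    simp_rw [real_inner_comm ξ]
    exact ofRealCLM.hasFDerivAt.comp x (innerSL ℝ ξ).hasFDerivAt
  convert (hinner.const_mul I).cexp using 1
  ext v
  simp only [real_inner_comm, ContinuousLinearMap.smulRight_apply, coe_innerSL_apply, real_smul,
    smul_apply, ContinuousLinearMap.comp_apply, ofRealCLM_apply, smul_eq_mul]
  ring

lemma norm_I_mul_inner_mul_le (ξ v : E) (z : ℂ) : ‖I * ⟪ξ, v⟫_ℝ * z‖ ≤ ‖v‖ * (‖ξ‖ * ‖z‖) := by
  rw [norm_mul, norm_mul, norm_I, one_mul, norm_real, Real.norm_eq_abs]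
  nlinarith [abs_real_inner_le_norm ξ v, norm_nonneg z, norm_nonneg v]

lemma norm_smulRight_exp_I_mul_inner_le (ξ x : E) (z : ℂ) :
    ‖(innerSL ℝ ξ).smulRight (I * exp (I * ⟪x, ξ⟫_ℝ) * z)‖ ≤ (1 + ‖ξ‖) * ‖z‖ := by
  rw [ContinuousLinearMap.norm_smulRight_apply, innerSL_apply_norm, norm_mul, norm_mul, norm_I,
    norm_exp_I_mul_ofReal, one_mul, one_mul]
  nlinarith [norm_nonneg ξ, norm_nonneg z]

variable [MeasurableSpace E] [BorelSpace E] [SecondCountableTopology E] {μ : Measure E}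
  {H : E → ℂ}

noncomputable def expIntegral (μ : Measure E) (H : E → ℂ) (x : E) : ℂ :=
  ∫ ξ, exp (I * ⟪x, ξ⟫_ℝ) * H ξ ∂μ

lemma integrable_exp_I_mul_inner_mul (hH : Integrable H μ) (x : E) :
    Integrable (fun ξ => exp (I * ⟪x, ξ⟫_ℝ) * H ξ) μ :=
  hH.bdd_mul (c := 1) (by fun_prop) (.of_forall fun ξ => (norm_exp_I_mul_ofReal _).le)

lemma integrable_smulRight_exp_I_mul_inner (hH : AEStronglyMeasurable H μ)
    (hHi : Integrable (fun ξ => (1 + ‖ξ‖) * ‖H ξ‖) μ) (x : E) :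
    Integrable (fun ξ => (innerSL ℝ ξ).smulRight (I * exp (I * ⟪x, ξ⟫_ℝ) * H ξ)) μ := by
  refine hHi.mono' ?_ (.of_forall fun ξ => norm_smulRight_exp_I_mul_inner_le ξ x (H ξ))
  have hinner : AEStronglyMeasurable (fun ξ : E => innerSL ℝ ξ) μ :=
    haveI := secondCountableTopologyEither_of_left E (E →L[ℝ] ℝ)
    (innerSL ℝ).continuous.aestronglyMeasurable
  have hsmulRight : Continuous fun p : (E →L[ℝ] ℝ) × ℂ => p.1.smulRight p.2 := by fun_prop
  have hc : AEStronglyMeasurable (fun ξ => I * exp (I * ⟪x, ξ⟫_ℝ) * H ξ) μ :=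
    (Continuous.aestronglyMeasurable (by fun_prop)).mul hH
  exact hsmulRight.comp_aestronglyMeasurable
    (f := fun ξ => (innerSL ℝ ξ, I * exp (I * ⟪x, ξ⟫_ℝ) * H ξ)) (hinner.prodMk hc)

lemma hasFDerivAt_expIntegral (hH : AEStronglyMeasurable H μ)
    (hHi : Integrable (fun ξ => (1 + ‖ξ‖) * ‖H ξ‖) μ) (x : E) :
    HasFDerivAt (expIntegral μ H)
      (∫ ξ, (innerSL ℝ ξ).smulRight (I * exp (I * ⟪x, ξ⟫_ℝ) * H ξ) ∂μ) x := by
  have hH₁ := integrable_of_integrable_one_add_norm_mul hH hHi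
  refine hasFDerivAt_integral_of_dominated_of_fderiv_le (bound := fun ξ => (1 + ‖ξ‖) * ‖H ξ‖)
    (F := fun y ξ => exp (I * ⟪y, ξ⟫_ℝ) * H ξ)
    (F' := fun y ξ => (innerSL ℝ ξ).smulRight (I * exp (I * ⟪y, ξ⟫_ℝ) * H ξ)) univ_mem
    (.of_forall fun y => (integrable_exp_I_mul_inner_mul hH₁ y).aestronglyMeasurable)
    (integrable_exp_I_mul_inner_mul hH₁ x)
    (integrable_smulRight_exp_I_mul_inner hH hHi x).aestronglyMeasurable
    (.of_forall fun ξ y _ => norm_smulRight_exp_I_mul_inner_le ξ y (H ξ)) hHi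
    (.of_forall fun ξ y _ => ?_)
  refine ((hasFDerivAt_exp_I_mul_inner ξ y).mul_const (H ξ)).congr_fderiv ?_
  ext v
  simp only [FunLike.coe_smul, Pi.smul_apply, ContinuousLinearMap.smulRight_apply, smul_eq_mul,
    real_smul]
  ring

lemma fderiv_expIntegral_apply (hH : AEStronglyMeasurable H μ)
    (hHi : Integrable (fun ξ => (1 + ‖ξ‖) * ‖H ξ‖) μ) (x v : E) :
    fderiv ℝ (expIntegral μ H) x v = expIntegral μ (fun ξ => I * ⟪ξ, v⟫_ℝ * H ξ) x := by
  rw [(hasFDerivAt_expIntegral hH hHi x).fderiv,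
    ContinuousLinearMap.integral_apply (integrable_smulRight_exp_I_mul_inner hH hHi x)]
  refine integral_congr_ae (.of_forall fun ξ => ?_)
  simp only [ContinuousLinearMap.smulRight_apply, innerSL_apply_apply, real_smul]
  ring

lemma fderiv_apply_of_eventuallyEq_re_expIntegral {f : E → ℝ} {x : E}
    (hf : f =ᶠ[𝓝 x] fun y => (expIntegral μ H y).re) (hH : AEStronglyMeasurable H μ)
    (hHi : Integrable (fun ξ => (1 + ‖ξ‖) * ‖H ξ‖) μ) (v : E) :
    fderiv ℝ f x v = (expIntegral μ (fun ξ => I * ⟪ξ, v⟫_ℝ * H ξ) x).re := by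
  have hre := reCLM.hasFDerivAt.comp x (hasFDerivAt_expIntegral hH hHi x)
  rw [(hre.congr_of_eventuallyEq hf).fderiv, ← fderiv_expIntegral_apply hH hHi,
    (hasFDerivAt_expIntegral hH hHi x).fderiv]
  rfl

lemma integrable_one_add_norm_mul_norm_I_mul_inner_mul (hH : AEStronglyMeasurable H μ)
    (hHi : Integrable (fun ξ => (1 + ‖ξ‖) ^ 2 * ‖H ξ‖) μ) (v : E) :
    Integrable (fun ξ => (1 + ‖ξ‖) * ‖I * ⟪ξ, v⟫_ℝ * H ξ‖) μ := by
  refine (hHi.const_mul ‖v‖).mono' (by fun_prop) (.of_forall fun ξ => ?_)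
  have hξ : 0 ≤ 1 + ‖ξ‖ := by positivity
  rw [norm_mul, norm_norm, Real.norm_of_nonneg hξ]
  calc (1 + ‖ξ‖) * ‖I * ⟪ξ, v⟫_ℝ * H ξ‖ ≤ (1 + ‖ξ‖) * (‖v‖ * (‖ξ‖ * ‖H ξ‖)) := by
        gcongr; exact norm_I_mul_inner_mul_le ξ v (H ξ)
    _ ≤ ‖v‖ * ((1 + ‖ξ‖) ^ 2 * ‖H ξ‖) := by
        nlinarith [mul_nonneg (mul_nonneg (norm_nonneg v) (norm_nonneg (H ξ))) hξ]

lemma fderiv_fderiv_apply_of_eqOn_re_expIntegral {f : E → ℝ} {U : Set E} (hU : IsOpen U)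
    (hf : Set.EqOn f (fun y => (expIntegral μ H y).re) U) (hH : AEStronglyMeasurable H μ)
    (hHi : Integrable (fun ξ => (1 + ‖ξ‖) ^ 2 * ‖H ξ‖) μ) {x : E} (hx : x ∈ U) (v w : E) :
    fderiv ℝ (fun y => fderiv ℝ f y v) x w =
      ∫ ξ, -(⟪ξ, w⟫_ℝ * ⟪ξ, v⟫_ℝ) * (exp (I * ⟪x, ξ⟫_ℝ) * H ξ).re ∂μ := by
  set Hv : E → ℂ := fun ξ => I * ⟪ξ, v⟫_ℝ * H ξ
  have hHv : AEStronglyMeasurable Hv μ := (Continuous.aestronglyMeasurable (by fun_prop)).mul hH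
  have hHi₁ : Integrable (fun ξ => (1 + ‖ξ‖) * ‖H ξ‖) μ :=
    hHi.mono' (by fun_prop) (.of_forall fun ξ => by
      rw [norm_mul, norm_norm, Real.norm_of_nonneg (by positivity)]
      gcongr
      exact le_self_pow₀ (by simp) two_ne_zero)
  have hHvi : Integrable (fun ξ => (1 + ‖ξ‖) * ‖Hv ξ‖) μ :=
    integrable_one_add_norm_mul_norm_I_mul_inner_mul hH hHi v
  have hHwv : Integrable (fun ξ => I * ⟪ξ, w⟫_ℝ * Hv ξ) μ :=
    (hHvi.const_mul ‖w‖).mono' ((Continuous.aestronglyMeasurable (by fun_prop)).mul hHv)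
      (.of_forall fun ξ => by
        nlinarith [norm_I_mul_inner_mul_le ξ w (Hv ξ), norm_nonneg (Hv ξ), norm_nonneg w])
  have hderiv : (fun y => fderiv ℝ f y v) =ᶠ[𝓝 x] fun y => (expIntegral μ Hv y).re := by
    filter_upwards [hU.mem_nhds hx] with y hy
    exact fderiv_apply_of_eventuallyEq_re_expIntegral
      (eventuallyEq_of_mem (hU.mem_nhds hy) hf) hH hHi₁ v
  have hI_mul_I (e z : ℂ) (a b : ℝ) :
      e * (I * (a : ℂ) * (I * (b : ℂ) * z)) = ((-(a * b) : ℝ) : ℂ) * (e * z) := by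
    push_cast
    linear_combination (e * a * b * z) * I_mul_I
  rw [fderiv_apply_of_eventuallyEq_re_expIntegral hderiv hHv hHvi w, expIntegral,
    ← RCLike.re_to_complex, ← integral_re (integrable_exp_I_mul_inner_mul hHwv x)]
  simp only [Hv, hI_mul_I, RCLike.re_to_complex, re_ofReal_mul]

end ExpIntegral

lemma integral_eq_of_ae_add_comp_neg_eq {G F : Type*} [AddGroup G] [MeasurableSpace G]
    [MeasurableNeg G] {μ : Measure G} [μ.IsNegInvariant] [NormedAddCommGroup F]
    [NormedSpace ℝ F] {f g : G → F} (hf : Integrable f μ) (hg : Integrable g μ)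
    (h : ∀ᵐ ξ ∂μ, f ξ + f (-ξ) = g ξ + g (-ξ)) :
    ∫ ξ, f ξ ∂μ = ∫ ξ, g ξ ∂μ := by
  have := integral_congr_ae h
  rw [integral_add hf hf.comp_neg, integral_add hg hg.comp_neg, integral_neg_eq_self,
    integral_neg_eq_self, ← two_smul ℝ, ← two_smul ℝ] at this
  exact smul_right_injective F two_ne_zero this

lemma ae_inner_ne_zero {E : Type*} [NormedAddCommGroup E] [InnerProductSpace ℝ E]
    [FiniteDimensional ℝ E] [MeasurableSpace E] [BorelSpace E] (μ : Measure E)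
    [μ.IsAddHaarMeasure] {x : E} (hx : x ≠ 0) : ∀ᵐ ξ ∂μ, ⟪x, ξ⟫_ℝ ≠ 0 := by
  have hne : (ℝ ∙ x)ᗮ ≠ ⊤ := by
    rwa [Ne, Submodule.orthogonal_eq_top_iff, Submodule.span_singleton_eq_bot]
  filter_upwards [measure_eq_zero_iff_ae_notMem.1 (Measure.addHaar_submodule μ _ hne)] with ξ hξ
  rwa [SetLike.mem_coe, Submodule.mem_orthogonal_singleton_iff_inner_right] at hξ

lemma EuclideanSpace.norm_le_sum_abs {ι : Type*} [Fintype ι] (ξ : EuclideanSpace ℝ ι) :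
    ‖ξ‖ ≤ ∑ i, |ξ i| := by
  rw [EuclideanSpace.norm_eq, Real.sqrt_le_left (by positivity)]
  simp_rw [Real.norm_eq_abs]
  exact Finset.sum_sq_le_sq_sum_of_nonneg fun i _ => abs_nonneg _

lemma abs_inner_lt_mul_sum_abs {ι : Type*} [Fintype ι] {x ξ : EuclideanSpace ℝ ι} {M : ℝ}
    (hx : ‖x‖ < M) (hxξ : ⟪x, ξ⟫_ℝ ≠ 0) : |⟪x, ξ⟫_ℝ| < M * ∑ i, |ξ i| := by
  have hξ : 0 < ‖ξ‖ := norm_pos_iff.2 (by rintro rfl; simp at hxξ)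
  calc |⟪x, ξ⟫_ℝ| ≤ ‖x‖ * ‖ξ‖ := abs_real_inner_le_norm x ξ
    _ < M * ‖ξ‖ := by gcongr
    _ ≤ M * ∑ i, |ξ i| := by gcongr; exacts [(norm_nonneg x).trans hx.le, ξ.norm_le_sum_abs]

section AlphaFn

variable {d : ℕ} {M : ℝ} {G : EuclideanSpace ℝ (Fin d) → ℂ}

lemma betaFn_neg (ξ : EuclideanSpace ℝ (Fin d)) (s : ℝ) : betaFn G (-ξ) s = betaFn G ξ (-s) := by
  simp only [betaFn, neg_neg, ofReal_neg, mul_neg]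
  rw [add_comm]

lemma betaFn_neg_inner (x ξ : EuclideanSpace ℝ (Fin d)) :
    betaFn G ξ (-⟪x, ξ⟫_ℝ) =
      (exp (I * ⟪x, ξ⟫_ℝ) * G ξ).re + (exp (I * ⟪x, -ξ⟫_ℝ) * G (-ξ)).re := by
  simp only [betaFn, inner_neg_right, ofReal_neg, mul_neg, neg_neg, add_re]

lemma alphaFn_neg_add_alphaFn {ξ : EuclideanSpace ℝ (Fin d)} {s : ℝ} (hs : s ≠ 0)
    (hsM : |s| < M * ∑ i, |ξ i|) :
    alphaFn M G ξ (-s) + alphaFn M G (-ξ) s = -betaFn G ξ (-s) := by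
  have hflip (a b : ℝ) : (Set.Icc a b).indicator (fun _ => (1 : ℝ)) (-s) =
      (Set.Icc (-b) (-a)).indicator (fun _ => 1) s := by
    simp only [Set.indicator_apply, Set.mem_Icc, le_neg, neg_le, and_comm]
  have hIoc : (Set.Ioc (-(M * ∑ i, |ξ i|)) 0).indicator (fun _ => (1 : ℝ)) (-s) +
      (Set.Ioc (-(M * ∑ i, |ξ i|)) 0).indicator (fun _ => 1) s = 1 := by
    obtain ⟨hlo, hhi⟩ := abs_lt.1 hsM
    rcases hs.lt_or_gt with hs | hs
    · rw [Set.indicator_of_notMem (fun h => by linarith [h.2]),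
        Set.indicator_of_mem (Set.mem_Ioc.2 ⟨hlo, hs.le⟩), zero_add]
    · rw [Set.indicator_of_mem (Set.mem_Ioc.2 ⟨by linarith, by linarith⟩),
        Set.indicator_of_notMem (fun h => by linarith [h.2]), add_zero]
  have hsum : ∑ i, |(-ξ) i| = ∑ i, |ξ i| := by simp
  simp only [alphaFn, hsum, betaFn_neg, neg_neg, hflip 0 1, hflip (-1) 0, neg_zero]
  linear_combination (-betaFn G ξ (-s)) * hIoc

lemma abs_betaFn_le (ξ : EuclideanSpace ℝ (Fin d)) (t : ℝ) : |betaFn G ξ t| ≤ calG G ξ := by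
  refine (abs_re_le_norm _).trans ((norm_add_le _ _).trans_eq ?_)
  simp [calG, norm_exp]

lemma abs_gTilde_le (ξ : EuclideanSpace ℝ (Fin d)) : |gTilde G ξ| ≤ 3 * ‖G ξ‖ := by
  have hre := abs_le.1 (abs_re_le_norm (G ξ))
  have him := abs_le.1 (abs_im_le_norm (G ξ))
  rw [gTilde, abs_le]
  constructor <;> linarith

lemma abs_indicator_one_mul_le (S : Set ℝ) (t b : ℝ) :
    |S.indicator (fun _ => (1 : ℝ)) t * b| ≤ |b| := by
  by_cases ht : t ∈ S <;> simp [ht]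

lemma abs_alphaFn_le (ξ : EuclideanSpace ℝ (Fin d)) (t : ℝ) :
    |alphaFn M G ξ t| ≤ 4 * calG G ξ := by
  rw [alphaFn, sub_eq_add_neg, neg_mul]
  refine (abs_add_three _ _ _).trans ?_
  rw [abs_neg, abs_neg]
  linarith [abs_indicator_one_mul_le (Set.Ioc (-(M * ∑ i, |ξ i|)) 0) t (betaFn G ξ t),
    abs_indicator_one_mul_le (Set.Icc 0 1) t (gTilde G ξ),
    abs_indicator_one_mul_le (Set.Icc (-1) 0) t (gTilde G (-ξ)),
    abs_betaFn_le (G := G) ξ t, abs_gTilde_le (G := G) ξ, abs_gTilde_le (G := G) (-ξ),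
    show calG G ξ = ‖G ξ‖ + ‖G (-ξ)‖ from rfl]

lemma measurable_alphaFn (hG : Measurable G) : Measurable (Function.uncurry (alphaFn M G)) := by
  have hβ : Measurable (Function.uncurry (betaFn G)) := by
    unfold Function.uncurry betaFn; fun_prop
  have hg : Measurable (gTilde G) := by unfold gTilde; fun_prop
  have hS (S : EuclideanSpace ℝ (Fin d) → Set ℝ)
      (hS : MeasurableSet {p : EuclideanSpace ℝ (Fin d) × ℝ | p.2 ∈ S p.1}) :
      Measurable fun p : EuclideanSpace ℝ (Fin d) × ℝ =>
        (S p.1).indicator (fun _ => (1 : ℝ)) p.2 :=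
    measurable_const.indicator hS
  have h₁ := hS (fun ξ => Set.Ioc (-(M * ∑ i, |ξ i|)) 0)
    ((measurableSet_lt (by fun_prop) measurable_snd).inter
      (measurableSet_le measurable_snd measurable_const))
  have h₂ := hS (fun _ => Set.Icc 0 1) (measurable_snd measurableSet_Icc)
  have h₃ := hS (fun _ => Set.Icc (-1) 0) (measurable_snd (measurableSet_Icc (a := -1) (b := 0)))
  unfold Function.uncurry alphaFn
  fun_prop

lemma abs_mul_apply_le (ξ : EuclideanSpace ℝ (Fin d)) (j l : Fin d) :
    |ξ j * ξ l| ≤ (1 + ‖ξ‖) ^ 2 := by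
  have hj : |ξ j| ≤ ‖ξ‖ := PiLp.norm_apply_le ξ j
  have hl : |ξ l| ≤ ‖ξ‖ := PiLp.norm_apply_le ξ l
  rw [abs_mul, sq]
  gcongr <;> linarith

lemma integral_mul_alphaFn_eq (hG : Measurable G)
    (hInt : Integrable fun ξ : EuclideanSpace ℝ (Fin d) => (1 + ‖ξ‖) ^ 2 * calG G ξ)
    {x : EuclideanSpace ℝ (Fin d)} (hx : ‖x‖ < M) (hx0 : x ≠ 0) (j l : Fin d) :
    ∫ ξ, ξ j * ξ l * alphaFn M G ξ (-⟪x, ξ⟫_ℝ) =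
      ∫ ξ, -(ξ j * ξ l) * (exp (I * ⟪x, ξ⟫_ℝ) * G ξ).re := by
  have hα : Integrable fun ξ => ξ j * ξ l * alphaFn M G ξ (-⟪x, ξ⟫_ℝ) := by
    refine (hInt.const_mul 4).mono' ?_ (.of_forall fun ξ => ?_)
    · exact ((by fun_prop : Measurable fun ξ : EuclideanSpace ℝ (Fin d) => ξ j * ξ l).mul
        ((measurable_alphaFn hG).comp (measurable_id.prodMk (by fun_prop)))).aestronglyMeasurable
    · rw [Real.norm_eq_abs, abs_mul, mul_left_comm]
      exact mul_le_mul (abs_mul_apply_le ξ j l) (abs_alphaFn_le ξ _) (abs_nonneg _) (by positivity)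
  have hexp : Integrable fun ξ => -(ξ j * ξ l) * (exp (I * ⟪x, ξ⟫_ℝ) * G ξ).re := by
    refine hInt.mono' (by fun_prop) (.of_forall fun ξ => ?_)
    rw [Real.norm_eq_abs, abs_mul, abs_neg]
    refine mul_le_mul (abs_mul_apply_le ξ j l) ((abs_re_le_norm _).trans ?_) (abs_nonneg _)
      (by positivity)
    rw [norm_mul, norm_exp_I_mul_ofReal, one_mul, calG]
    exact le_add_of_nonneg_right (norm_nonneg _)
  refine integral_eq_of_ae_add_comp_neg_eq hα hexp ?_
  filter_upwards [ae_inner_ne_zero volume hx0] with ξ hξ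
  have hsym := alphaFn_neg_add_alphaFn (G := G) hξ (abs_inner_lt_mul_sum_abs hx hξ)
  rw [betaFn_neg_inner] at hsym
  have hneg (i : Fin d) : (-ξ) i = -ξ i := rfl
  simp only [hneg, inner_neg_right, neg_neg] at hsym ⊢
  linear_combination (ξ j * ξ l) * hsym

end AlphaFn

theorem second_derivative_representation_general (d : ℕ) (M : ℝ)
    (u : EuclideanSpace ℝ (Fin d) → ℝ)
    (G : EuclideanSpace ℝ (Fin d) → ℂ) (hG : Measurable G)
    (hrep : ∀ x : EuclideanSpace ℝ (Fin d), (∀ i, |x i| ≤ M) →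
      (u x : ℂ) = ∫ ξ, Complex.exp (Complex.I * ((inner ℝ x ξ : ℝ) : ℂ)) * G ξ)
    (hInt : Integrable (fun ξ : EuclideanSpace ℝ (Fin d) =>
      (1 + ‖ξ‖) ^ 2 * calG G ξ))
    (j l : Fin d) :
    ∀ᵐ x ∂(volume.restrict (Metric.ball (0 : EuclideanSpace ℝ (Fin d)) M)),
      fderiv ℝ (fun y => fderiv ℝ u y (EuclideanSpace.single l 1)) x
          (EuclideanSpace.single j 1) =
        ∫ ξ, ξ j * ξ l * alphaFn M G ξ (-(inner ℝ x ξ : ℝ)) := by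
  -- `volume` has no atoms once `Fin d` is nonempty
  have : Nonempty (Fin d) := ⟨j⟩
  have hu : Set.EqOn u (fun y => (expIntegral volume G y).re) (Metric.ball 0 M) := fun y hy => by
    have hcube (i : Fin d) : |y i| ≤ M :=
      (PiLp.norm_apply_le y i).trans (mem_ball_zero_iff.1 hy).le
    rw [← ofReal_re (u y), hrep y hcube]
    rfl
  have hG₂ : Integrable fun ξ : EuclideanSpace ℝ (Fin d) => (1 + ‖ξ‖) ^ 2 * ‖G ξ‖ :=
    hInt.mono' (by fun_prop) (.of_forall fun ξ => by
      rw [norm_mul, norm_norm, Real.norm_of_nonneg (by positivity), calG]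
      gcongr
      exact le_add_of_nonneg_right (norm_nonneg _))
  filter_upwards [ae_restrict_mem Metric.isOpen_ball.measurableSet, Measure.ae_ne _ 0]
    with x hx hx0
  rw [fderiv_fderiv_apply_of_eqOn_re_expIntegral Metric.isOpen_ball hu hG.aestronglyMeasurable hG₂
    hx, integral_mul_alphaFn_eq hG hInt (mem_ball_zero_iff.1 hx) hx0]
  simp only [EuclideanSpace.inner_single_right, one_mul, conj_trivial]

/-- with `u(x) = ∫ e^{ix·ξ} G(ξ) dξ` on `[−M,M]^d`, hence also
`u(x) = ∫∫ (x·ξ + t)₊ α(ξ,t) dt dξ`, for all `j, ℓ ∈ {1,…,d}` and almost every `x` in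
the interior of `B_M^d` (where `ξ ↦ α(ξ, −x·ξ)` has no jump) the second-order partial
derivative of `u` satisfies `∂_j ∂_ℓ u(x) = ∫ ξ_j ξ_ℓ α(ξ, −x·ξ) dξ`. -/
theorem second_derivative_representation (d : ℕ) (hd : 0 < d) (M : ℝ) (hM : 1 ≤ M)
    (u : EuclideanSpace ℝ (Fin d) → ℝ)
    (G : EuclideanSpace ℝ (Fin d) → ℂ) (hG : Measurable G)
    (hrep : ∀ x : EuclideanSpace ℝ (Fin d), (∀ i, |x i| ≤ M) →
      (u x : ℂ) = ∫ ξ, Complex.exp (Complex.I * ((inner ℝ x ξ : ℝ) : ℂ)) * G ξ)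
    (hrep2 : ∀ x : EuclideanSpace ℝ (Fin d), (∀ i, |x i| ≤ M) →
      u x = ∫ ξ, ∫ t : ℝ, max ((inner ℝ x ξ : ℝ) + t) 0 * alphaFn M G ξ t)
    (hInt : Integrable (fun ξ : EuclideanSpace ℝ (Fin d) =>
      (1 + ‖ξ‖) ^ 2 * calG G ξ))
    (j l : Fin d) :
    ∀ᵐ x ∂(volume.restrict (Metric.ball (0 : EuclideanSpace ℝ (Fin d)) M)),
      fderiv ℝ (fun y => fderiv ℝ u y (EuclideanSpace.single l 1)) x
          (EuclideanSpace.single j 1) =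
        ∫ ξ, ξ j * ξ l * alphaFn M G ξ (-(inner ℝ x ξ : ℝ)) :=
  second_derivative_representation_general d M u G hG hrep hInt j l
end

section
/- Let π_A be a radially symmetric probability density on ℝ^d (d ≥ 2) with nonincreasing-enough radial profile so that the stated integrals converge, i.e. π_A(ξ) = π_A*(‖ξ‖₂). Then for every x ∈ ℝ^d with x ≠ 0 and every δ > 0, the slab S = {ξ ∈ ℝ^d : |x·ξ| ≤ δ} satisfies ∫_S π_A(ξ) dξ ≤ (2 ω_{d−1} δ / ‖x‖₂) · (π_A*(0) + ω_d^{−1}), provided π_A* is nonincreasing and π_A*(0) = max π_A*. -/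
/-!
Rotate `x` onto the first coordinate axis: the slab becomes `{ξ | |ξ 0| ≤ δ / ‖x‖}`, and by
Fubini its mass is at most the width `2δ/‖x‖` times `∫_{ℝ^{d-1}} π*(‖y‖) dy`, because `π*` is
nonincreasing and `‖y‖ ≤ ‖(t, y)‖`. In polar coordinates this integral is
`ω_{d-1} ∫₀^∞ π*(r) r^{d-2} dr`; the part over `r ≤ 1` is at most `π*(0)`, and on `r ≥ 1`
we have `r^{d-2} ≤ r^{d-1}`, so the rest is at most `∫₀^∞ π*(r) r^{d-1} dr = ω_d⁻¹`.
-/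

open MeasureTheory

/-- The surface area `ω_n` of the unit sphere in `ℝ^n`, i.e. `n` times the volume of the
unit ball. -/
noncomputable def sphereArea (n : ℕ) : ℝ :=
  n * (volume (Metric.ball (0 : EuclideanSpace ℝ (Fin n)) 1)).toReal

open Set Metric
open scoped ENNReal

theorem lintegral_fun_norm_addHaar {E : Type*} [NormedAddCommGroup E] [NormedSpace ℝ E]
    [MeasurableSpace E] [BorelSpace E] [FiniteDimensional ℝ E] [Nontrivial E] (μ : Measure E)
    [μ.IsAddHaarMeasure] {f : ℝ → ℝ≥0∞} (hf : Measurable f) :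
    ∫⁻ x, f ‖x‖ ∂μ = Module.finrank ℝ E * μ (ball 0 1) *
      ∫⁻ y in Ioi (0 : ℝ), ENNReal.ofReal (y ^ (Module.finrank ℝ E - 1)) * f y := by
  calc ∫⁻ x, f ‖x‖ ∂μ = ∫⁻ x : ({(0)}ᶜ : Set E), f ‖x.1‖ ∂(μ.comap (↑)) := by
        conv_lhs => rw [← restrict_compl_singleton (μ := μ) 0]
        rw [← lintegral_subtype_comap (measurableSet_singleton _).compl]
    _ = ∫⁻ x, f x.2 ∂μ.toSphere.prod (.volumeIoiPow (Module.finrank ℝ E - 1)) := by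
        simpa using μ.measurePreserving_homeomorphUnitSphereProd.lintegral_comp_emb
          (Homeomorph.measurableEmbedding _) (f ∘ Subtype.val ∘ Prod.snd)
    _ = μ.toSphere univ * ∫⁻ y : Ioi (0 : ℝ), f y ∂.volumeIoiPow (Module.finrank ℝ E - 1) := by
        rw [lintegral_prod _ (by fun_prop)]
        dsimp only
        rw [lintegral_const, mul_comm]
    _ = _ := by
        rw [Measure.toSphere_apply_univ, Measure.volumeIoiPow,
          lintegral_withDensity_eq_lintegral_mul _ (by fun_prop) (by fun_prop),
          ← lintegral_subtype_comap measurableSet_Ioi (fun y ↦ ENNReal.ofReal (y ^ _) * f y)]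
        rfl

theorem sphereArea_pos (n : ℕ) [NeZero n] : 0 < sphereArea n :=
  mul_pos (Nat.cast_pos.2 (Nat.pos_of_neZero n))
    (ENNReal.toReal_pos (measure_ball_pos _ _ one_pos).ne' measure_ball_lt_top.ne)

theorem ofReal_sphereArea (n : ℕ) :
    ENNReal.ofReal (sphereArea n) = n * volume (ball (0 : EuclideanSpace ℝ (Fin n)) 1) := by
  rw [sphereArea, ENNReal.ofReal_mul (by positivity), ENNReal.ofReal_toReal measure_ball_lt_top.ne,
    ENNReal.ofReal_natCast]

theorem lintegral_fun_norm_euclideanSpace (n : ℕ) [NeZero n] {f : ℝ → ℝ≥0∞} (hf : Measurable f) :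
    ∫⁻ x : EuclideanSpace ℝ (Fin n), f ‖x‖ =
      ENNReal.ofReal (sphereArea n) * ∫⁻ y in Ioi (0 : ℝ), ENNReal.ofReal (y ^ (n - 1)) * f y := by
  rw [lintegral_fun_norm_addHaar _ hf, finrank_euclideanSpace_fin, ofReal_sphereArea]

theorem lintegral_fun_norm_le_of_antitoneOn (n : ℕ) [NeZero n] {g : ℝ → ℝ≥0∞} (hg : Measurable g)
    (hanti : AntitoneOn g (Ici 0)) :
    ∫⁻ y : EuclideanSpace ℝ (Fin n), g ‖y‖ ≤
      ENNReal.ofReal (sphereArea n) *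
        (g 0 + ∫⁻ s in Ioi (0 : ℝ), ENNReal.ofReal (s ^ n) * g s) := by
  rw [lintegral_fun_norm_euclideanSpace n hg]
  gcongr
  have near : ∀ s ∈ Ioc (0 : ℝ) 1, ENNReal.ofReal (s ^ (n - 1)) * g s ≤ g 0 := fun s hs ↦
    calc ENNReal.ofReal (s ^ (n - 1)) * g s ≤ 1 * g 0 := by
          gcongr
          · exact ENNReal.ofReal_le_one.2 (pow_le_one₀ hs.1.le hs.2)
          · exact hanti self_mem_Ici (mem_Ici.2 hs.1.le) hs.1.le
      _ = g 0 := one_mul _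
  have far : ∀ s ∈ Ioi (1 : ℝ), ENNReal.ofReal (s ^ (n - 1)) * g s ≤ ENNReal.ofReal (s ^ n) * g s :=
    fun s hs ↦ by gcongr; exacts [hs.le, n.sub_le 1]
  calc ∫⁻ s in Ioi (0 : ℝ), ENNReal.ofReal (s ^ (n - 1)) * g s
      = (∫⁻ s in Ioc 0 1, ENNReal.ofReal (s ^ (n - 1)) * g s) +
          ∫⁻ s in Ioi 1, ENNReal.ofReal (s ^ (n - 1)) * g s := by
        rw [← lintegral_union measurableSet_Ioi Ioc_disjoint_Ioi_same,
          Ioc_union_Ioi_eq_Ioi zero_le_one]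
    _ ≤ (∫⁻ _ in Ioc (0 : ℝ) 1, g 0) + ∫⁻ s in Ioi 1, ENNReal.ofReal (s ^ n) * g s := by
        gcongr ?_ + ?_
        · exact setLIntegral_mono measurable_const near
        · exact setLIntegral_mono (by fun_prop) far
    _ ≤ g 0 + ∫⁻ s in Ioi 0, ENNReal.ofReal (s ^ n) * g s := by
        rw [setLIntegral_const, Real.volume_Ioc, sub_zero, ENNReal.ofReal_one, mul_one]
        gcongr
        exact zero_le_one

theorem setLIntegral_abs_inner_le_fun_norm_eq {E : Type*} [NormedAddCommGroup E]
    [InnerProductSpace ℝ E] [FiniteDimensional ℝ E] [MeasurableSpace E] [BorelSpace E] (g : ℝ → ℝ≥0∞) {u v : E}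
    (huv : ‖u‖ = ‖v‖) (δ : ℝ) :
    ∫⁻ ξ in {ξ | |(inner ℝ u ξ : ℝ)| ≤ δ}, g ‖ξ‖ =
      ∫⁻ ξ in {ξ | |(inner ℝ v ξ : ℝ)| ≤ δ}, g ‖ξ‖ := by
  set L := (Submodule.span ℝ {v - u})ᗮ.reflection
  have hLv : L v = u := Submodule.reflection_sub huv.symm
  have hpre : L ⁻¹' {ξ | |(inner ℝ u ξ : ℝ)| ≤ δ} = {ξ | |(inner ℝ v ξ : ℝ)| ≤ δ} := by
    ext ξ
    simp only [mem_preimage, mem_ofPred_eq, ← hLv, LinearIsometryEquiv.inner_map_map]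
  rw [← hpre,
    ← L.measurePreserving.setLIntegral_comp_preimage_emb L.toHomeomorph.measurableEmbedding]
  simp only [LinearIsometryEquiv.norm_map]

theorem lintegral_euclideanSpace_succ (n : ℕ) {F : EuclideanSpace ℝ (Fin (n + 1)) → ℝ≥0∞}
    (hF : Measurable F) :
    ∫⁻ ξ, F ξ = ∫⁻ t, ∫⁻ y : EuclideanSpace ℝ (Fin n), F (WithLp.toLp 2 (Fin.cons t y.ofLp)) := by
  have hcons : MeasurePreserving (fun p : ℝ × EuclideanSpace ℝ (Fin n) ↦
      (WithLp.toLp 2 (Fin.cons p.1 p.2.ofLp) : EuclideanSpace ℝ (Fin (n + 1))))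
      (volume.prod volume) volume := by
    have h :=
      (EuclideanSpace.volume_preserving_symm_measurableEquiv_toLp (Fin (n + 1))).symm.comp <|
        (volume_preserving_piFinSuccAbove (fun _ ↦ ℝ) 0).symm.comp <|
          (MeasurePreserving.id volume).prod
            (EuclideanSpace.volume_preserving_symm_measurableEquiv_toLp (Fin n))
    convert h using 1
    · -- the inner-product-space and `PiLp` measurable structures agree definitionally
      rfl
    · funext p
      simp only [MeasurableEquiv.symm_symm, MeasurableEquiv.piFinSuccAbove_symm_apply,
        Fin.insertNthEquiv_zero]
      rfl
  rw [← hcons.lintegral_comp hF]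
  exact lintegral_prod _ (hF.comp hcons.measurable).aemeasurable

theorem norm_le_norm_toLp_cons (n : ℕ) (t : ℝ) (y : EuclideanSpace ℝ (Fin n)) :
    ‖y‖ ≤ ‖(WithLp.toLp 2 (Fin.cons t y.ofLp) : EuclideanSpace ℝ (Fin (n + 1)))‖ := by
  refine (pow_le_pow_iff_left₀ (norm_nonneg _) (norm_nonneg _) two_ne_zero).1 ?_
  simp only [EuclideanSpace.norm_sq_eq, Fin.sum_univ_succ, Fin.cons_zero, Fin.cons_succ]
  exact le_add_of_nonneg_left (sq_nonneg _)

theorem setLIntegral_abs_apply_zero_le_fun_norm_le (n : ℕ) {g : ℝ → ℝ≥0∞} (hg : Measurable g)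
    (hanti : AntitoneOn g (Ici 0)) (a : ℝ) :
    ∫⁻ ξ in {ξ : EuclideanSpace ℝ (Fin (n + 1)) | |ξ 0| ≤ a}, g ‖ξ‖ ≤
      ENNReal.ofReal (2 * a) * ∫⁻ y : EuclideanSpace ℝ (Fin n), g ‖y‖ := by
  have hS : MeasurableSet {ξ : EuclideanSpace ℝ (Fin (n + 1)) | |ξ 0| ≤ a} :=
    measurableSet_le (by fun_prop) measurable_const
  rw [← lintegral_indicator hS, lintegral_euclideanSpace_succ n
    ((show Measurable fun ξ : EuclideanSpace ℝ (Fin (n + 1)) ↦ g ‖ξ‖ by fun_prop).indicator hS)]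
  calc ∫⁻ t, ∫⁻ y : EuclideanSpace ℝ (Fin n),
        {ξ : EuclideanSpace ℝ (Fin (n + 1)) | |ξ 0| ≤ a}.indicator (g ‖·‖)
          (WithLp.toLp 2 (Fin.cons t y.ofLp))
      ≤ ∫⁻ t, (Icc (-a) a).indicator (fun _ ↦ ∫⁻ y : EuclideanSpace ℝ (Fin n), g ‖y‖) t := by
        refine lintegral_mono fun t ↦ ?_
        by_cases ht : |t| ≤ a
        · rw [indicator_of_mem (mem_Icc.2 (abs_le.1 ht))]
          refine lintegral_mono fun y ↦ (indicator_le_self _ _ _).trans ?_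
          exact hanti (norm_nonneg _) (norm_nonneg _) (norm_le_norm_toLp_cons n t y)
        · simp [ht]
    _ = ENNReal.ofReal (2 * a) * ∫⁻ y : EuclideanSpace ℝ (Fin n), g ‖y‖ := by
        rw [lintegral_indicator_const measurableSet_Icc, Real.volume_Icc, mul_comm, sub_neg_eq_add,
          two_mul]

theorem setLIntegral_abs_inner_le_fun_norm_le (n : ℕ) {g : ℝ → ℝ≥0∞} (hg : Measurable g)
    (hanti : AntitoneOn g (Ici 0)) {x : EuclideanSpace ℝ (Fin (n + 2))} (hx : x ≠ 0) (δ : ℝ) :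
    ∫⁻ ξ in {ξ | |(inner ℝ x ξ : ℝ)| ≤ δ}, g ‖ξ‖ ≤
      ENNReal.ofReal (2 * (δ / ‖x‖)) * (ENNReal.ofReal (sphereArea (n + 1)) *
        (g 0 + (ENNReal.ofReal (sphereArea (n + 2)))⁻¹ *
          ∫⁻ ξ : EuclideanSpace ℝ (Fin (n + 2)), g ‖ξ‖)) := by
  have hω : ENNReal.ofReal (sphereArea (n + 2)) ≠ 0 :=
    (ENNReal.ofReal_pos.2 (sphereArea_pos (n + 2))).ne'
  have moment : ∫⁻ s in Ioi (0 : ℝ), ENNReal.ofReal (s ^ (n + 1)) * g s =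
      (ENNReal.ofReal (sphereArea (n + 2)))⁻¹ * ∫⁻ ξ : EuclideanSpace ℝ (Fin (n + 2)), g ‖ξ‖ := by
    rw [lintegral_fun_norm_euclideanSpace (n + 2) hg, ← mul_assoc,
      ENNReal.inv_mul_cancel hω ENNReal.ofReal_ne_top, one_mul]
    rfl
  set v : EuclideanSpace ℝ (Fin (n + 2)) := ‖x‖ • EuclideanSpace.single 0 1
  have hv : ‖x‖ = ‖v‖ := by simp only [v, norm_smul, norm_norm, PiLp.norm_single, norm_one, mul_one]
  have hslab : {ξ | |(inner ℝ v ξ : ℝ)| ≤ δ} = {ξ | |ξ 0| ≤ δ / ‖x‖} := by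
    ext ξ
    simp only [v, mem_ofPred_eq, inner_smul_left, Real.ringHom_apply,
      EuclideanSpace.inner_single_left, one_mul, mul_comm, abs_mul, abs_norm,
      le_div_iff₀ (norm_pos_iff.2 hx)]
  calc ∫⁻ ξ in {ξ | |(inner ℝ x ξ : ℝ)| ≤ δ}, g ‖ξ‖
      = ∫⁻ ξ in {ξ : EuclideanSpace ℝ (Fin (n + 2)) | |ξ 0| ≤ δ / ‖x‖}, g ‖ξ‖ := by
        rw [setLIntegral_abs_inner_le_fun_norm_eq g hv, hslab]
    _ ≤ ENNReal.ofReal (2 * (δ / ‖x‖)) * ∫⁻ y : EuclideanSpace ℝ (Fin (n + 1)), g ‖y‖ :=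
        setLIntegral_abs_apply_zero_le_fun_norm_le (n + 1) hg hanti _
    _ ≤ _ := by
        rw [← moment]
        gcongr
        exact lintegral_fun_norm_le_of_antitoneOn (n + 1) hg hanti

theorem slab_mass_bound_general (d : ℕ) (hd : 2 ≤ d)
    (πA : EuclideanSpace ℝ (Fin d) → ℝ) (πAs : ℝ → ℝ)
    (hradial : ∀ ξ, πA ξ = πAs ‖ξ‖)
    (hnonneg : ∀ ξ, 0 ≤ πA ξ) (hmeas : Measurable πAs)
    (hprob : ∫ ξ, πA ξ = 1)
    (hmono : ∀ r s : ℝ, 0 ≤ r → r ≤ s → πAs s ≤ πAs r)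
    (x : EuclideanSpace ℝ (Fin d)) (hx : x ≠ 0) (δ : ℝ) (hδ : 0 < δ) :
    (∫ ξ in {ξ : EuclideanSpace ℝ (Fin d) | |(inner ℝ x ξ : ℝ)| ≤ δ}, πA ξ) ≤
      (2 * sphereArea (d - 1) * δ / ‖x‖) * (πAs 0 + (sphereArea d)⁻¹) := by
  obtain ⟨n, rfl⟩ : ∃ n, d = n + 2 := ⟨d - 2, by omega⟩
  obtain rfl : πA = fun ξ ↦ πAs ‖ξ‖ := funext hradial
  have hint : Integrable fun ξ : EuclideanSpace ℝ (Fin (n + 2)) ↦ πAs ‖ξ‖ :=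
    Integrable.of_integral_ne_zero (hprob ▸ one_ne_zero)
  have hmass : ∫⁻ ξ : EuclideanSpace ℝ (Fin (n + 2)), ENNReal.ofReal (πAs ‖ξ‖) = 1 := by
    rw [← ofReal_integral_eq_lintegral_ofReal hint (ae_of_all _ hnonneg), hprob, ENNReal.ofReal_one]
  have hπ0 : 0 ≤ πAs 0 := by simpa using hnonneg 0
  have hω₁ := sphereArea_pos (n + 1)
  have hω₂ := sphereArea_pos (n + 2)
  rw [integral_eq_lintegral_of_nonneg_ae (ae_of_all _ hnonneg)
    (hmeas.comp measurable_norm).aestronglyMeasurable]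
  refine ENNReal.toReal_le_of_le_ofReal (by positivity) ?_
  calc ∫⁻ ξ in {ξ | |(inner ℝ x ξ : ℝ)| ≤ δ}, ENNReal.ofReal (πAs ‖ξ‖)
      ≤ _ := setLIntegral_abs_inner_le_fun_norm_le n (g := fun s ↦ ENNReal.ofReal (πAs s))
        (by fun_prop) (fun r hr s _ hrs ↦ ENNReal.ofReal_le_ofReal (hmono r s hr hrs)) hx δ
    _ = _ := by
        rw [hmass, mul_one, ← ENNReal.ofReal_inv_of_pos hω₂,
          ← ENNReal.ofReal_add hπ0 (by positivity), ← ENNReal.ofReal_mul hω₁.le,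
          ← ENNReal.ofReal_mul (by positivity), show n + 2 - 1 = n + 1 from rfl]
        congr 1
        ring

/-- for a radially symmetric probability density `π_A` on `ℝ^d` (`d ≥ 2`)
with nonincreasing radial profile `π_A*` (so in particular `π_A*(0) = max π_A*`), for every
`x ≠ 0` and `δ > 0`, the slab `S = {ξ : |x·ξ| ≤ δ}` satisfies
`∫_S π_A ≤ (2 ω_{d−1} δ/‖x‖₂)(π_A*(0) + ω_d⁻¹)`. -/
theorem slab_mass_bound (d : ℕ) (hd : 2 ≤ d)
    (πA : EuclideanSpace ℝ (Fin d) → ℝ) (πAs : ℝ → ℝ)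
    (hradial : ∀ ξ, πA ξ = πAs ‖ξ‖)
    (hnonneg : ∀ ξ, 0 ≤ πA ξ) (hmeas : Measurable πAs)
    (hprob : ∫ ξ, πA ξ = 1)
    (hmono : ∀ r s : ℝ, 0 ≤ r → r ≤ s → πAs s ≤ πAs r)
    (hmax : ∀ r : ℝ, πAs r ≤ πAs 0)
    (x : EuclideanSpace ℝ (Fin d)) (hx : x ≠ 0) (δ : ℝ) (hδ : 0 < δ) :
    (∫ ξ in {ξ : EuclideanSpace ℝ (Fin d) | |(inner ℝ x ξ : ℝ)| ≤ δ}, πA ξ) ≤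
      (2 * sphereArea (d - 1) * δ / ‖x‖) * (πAs 0 + (sphereArea d)⁻¹) :=
  slab_mass_bound_general d hd πA πAs hradial hnonneg hmeas hprob hmono x hx δ hδ
end
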